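/- arXiv:1804.00700 — 2 statements merged into one kernel-verified Lean document; each statement's English description precedes it below -/
import Mathlib

section
/- Let Γ be a group acting on a monoid M by monoid automorphisms, let f ∈ M, let 𝒜 = Mˣ be the unit group of M with the induced Γ-action, and let 𝒜_f = {α ∈ Mˣ : α^{-1}·f·α = f} be the stabilizer subgroup of f. Assume 𝒜_f is finite and Γ-stable (σ • 𝒜_f = 𝒜_f for all σ ∈ Γ), and suppose φ : Γ → Mˣ satisfies σ • f = (φ σ)^{-1}·f·(φ σ) for all σ ∈ Γ. Then: (i) for every σ ∈ Γ, φ σ lies in the normalizer of 𝒜_f in Mˣ; and (ii) for all σ, τ ∈ Γ, the element (φ σ)·(σ • φ τ)·(φ(στ))^{-1} lies in 𝒜_f, i.e. φ is a 1-cocycle with values in the quotient 𝒜_f\N(𝒜_f). -/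
/-!
The units of `M` act on the right of `M` by `x ↦ u⁻¹ x u`, and `𝒜_f` is the stabilizer of `f`.
Since `Γ` acts by automorphisms, `σ • 𝒜_f` is the stabilizer of `σ • f = (φ σ)⁻¹ f (φ σ)`, which
conjugation by `φ σ` carries onto `𝒜_f`; so `σ • 𝒜_f = 𝒜_f` makes `φ σ` normalize `𝒜_f`.
For the cocycle, `(σ τ) • f = σ • (τ • f)` is the conjugate of `f` both by `φ (σ τ)` and by
`φ σ * σ • φ τ`, and two units conjugating `f` to the same element differ by an element of `𝒜_f`.
-/

/-- The action of `σ : Γ` on the units of a monoid `M`, induced by a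
`MulDistribMulAction` of `Γ` on `M`. -/
def unitsSMul {Γ M : Type*} [Group Γ] [Monoid M] [MulDistribMulAction Γ M]
    (σ : Γ) (u : Mˣ) : Mˣ :=
  Units.map (MulDistribMulAction.toMonoidHom M σ) u

section Conj

variable {M : Type*} [Monoid M]

def unitsConj (u : Mˣ) (x : M) : M := ↑u⁻¹ * x * ↑u

def conjStab (f : M) : Set Mˣ := {α | unitsConj α f = f}

theorem unitsConj_mul (u v : Mˣ) (x : M) :
    unitsConj (u * v) x = unitsConj v (unitsConj u x) := by
  simp only [unitsConj, mul_inv_rev, Units.val_mul, mul_assoc]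

theorem unitsConj_injective (u : Mˣ) : Function.Injective (unitsConj u : M → M) := by
  intro x y h
  simpa only [unitsConj, Units.mul_right_inj, Units.mul_left_inj] using h

theorem mul_inv_mem_conjStab_of_unitsConj_eq {u v : Mˣ} {f : M}
    (h : unitsConj u f = unitsConj v f) : u * v⁻¹ ∈ conjStab f := by
  show unitsConj (u * v⁻¹) f = f
  rw [unitsConj_mul, h, ← unitsConj_mul, mul_inv_cancel]
  simp [unitsConj]

theorem image_conj_conjStab_unitsConj (u : Mˣ) (f : M) :
    (fun α => u * α * u⁻¹) '' conjStab (unitsConj u f) = conjStab f := by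
  rw [Set.image_eq_preimage_of_inverse (g := fun β => u⁻¹ * β * u)
    (fun α => by group) (fun β => by group)]
  ext β
  change unitsConj (u⁻¹ * β * u) (unitsConj u f) = unitsConj u f ↔ unitsConj β f = f
  rw [← unitsConj_mul, show u * (u⁻¹ * β * u) = β * u by group, unitsConj_mul,
    (unitsConj_injective u).eq_iff]

end Conj

section GaloisAction

variable {Γ M : Type*} [Group Γ] [Monoid M] [MulDistribMulAction Γ M]

theorem unitsSMul_val (σ : Γ) (u : Mˣ) : (↑(unitsSMul σ u) : M) = σ • (u : M) := rfl

theorem unitsSMul_inv (σ : Γ) (u : Mˣ) : unitsSMul σ u⁻¹ = (unitsSMul σ u)⁻¹ :=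
  map_inv (Units.map (MulDistribMulAction.toMonoidHom M σ)) u

theorem unitsSMul_unitsSMul_inv (σ : Γ) (u : Mˣ) : unitsSMul σ (unitsSMul σ⁻¹ u) = u :=
  Units.ext (smul_inv_smul σ (u : M))

theorem smul_unitsConj (σ : Γ) (u : Mˣ) (x : M) :
    σ • unitsConj u x = unitsConj (unitsSMul σ u) (σ • x) := by
  simp only [unitsConj, smul_mul', ← unitsSMul_val, unitsSMul_inv]

theorem image_unitsSMul_conjStab (σ : Γ) (f : M) :
    unitsSMul σ '' conjStab f = conjStab (σ • f) := by
  rw [Set.image_eq_preimage_of_inverse (g := unitsSMul σ⁻¹)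
    (fun α => by simpa using unitsSMul_unitsSMul_inv σ⁻¹ α) (unitsSMul_unitsSMul_inv σ)]
  ext α
  change unitsConj (unitsSMul σ⁻¹ α) f = f ↔ unitsConj α (σ • f) = σ • f
  rw [← (MulAction.injective σ).eq_iff]
  simp only [smul_unitsConj, unitsSMul_unitsSMul_inv]

end GaloisAction

theorem fom_cocycle_in_normalizer_general
    {Γ M : Type*} [Group Γ] [Monoid M] [MulDistribMulAction Γ M]
    (f : M)
    (𝒜 : Set Mˣ) (h𝒜 : 𝒜 = {α : Mˣ | (↑α⁻¹ : M) * f * ↑α = f})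
    (hstable : ∀ σ : Γ, (fun α => unitsSMul σ α) '' 𝒜 = 𝒜)
    (φ : Γ → Mˣ)
    (hφ : ∀ σ : Γ, σ • f = (↑(φ σ)⁻¹ : M) * f * ↑(φ σ)) :
    (∀ σ : Γ, (fun α => φ σ * α * (φ σ)⁻¹) '' 𝒜 = 𝒜) ∧
      (∀ σ τ : Γ, φ σ * unitsSMul σ (φ τ) * (φ (σ * τ))⁻¹ ∈ 𝒜) := by
  change 𝒜 = conjStab f at h𝒜
  change ∀ σ : Γ, σ • f = unitsConj (φ σ) f at hφ
  subst h𝒜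
  refine ⟨fun σ => ?_, fun σ τ => mul_inv_mem_conjStab_of_unitsConj_eq ?_⟩
  · have h := image_conj_conjStab_unitsConj (φ σ) f
    rwa [← hφ, ← image_unitsSMul_conjStab, hstable] at h
  · calc unitsConj (φ σ * unitsSMul σ (φ τ)) f
        = σ • unitsConj (φ τ) f := by rw [unitsConj_mul, ← hφ, smul_unitsConj]
      _ = unitsConj (φ (σ * τ)) f := by rw [← hφ, ← hφ, smul_smul]

/-- **Doyle–Silverman, Proposition 4.1(a) (abstract form).**  Let `Γ` act on a monoid `M`
by monoid automorphisms, let `f ∈ M`, let `𝒜_f ⊆ Mˣ` be the stabilizer of `f` under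
conjugation, assumed finite and `Γ`-stable, and let `φ : Γ → Mˣ` satisfy
`σ • f = (φ σ)⁻¹ · f · (φ σ)`.  Then each `φ σ` normalizes `𝒜_f`, and
`φ` is a `1`-cocycle with values in `𝒜_f\N(𝒜_f)`:  for all `σ τ`, the element
`(φ σ)·(σ • φ τ)·(φ (σ·τ))⁻¹` lies in `𝒜_f`. -/
theorem fom_cocycle_in_normalizer
    {Γ M : Type*} [Group Γ] [Monoid M] [MulDistribMulAction Γ M]
    (f : M)
    (𝒜 : Set Mˣ) (h𝒜 : 𝒜 = {α : Mˣ | (↑α⁻¹ : M) * f * ↑α = f})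
    (hfin : 𝒜.Finite)
    (hstable : ∀ σ : Γ, (fun α => unitsSMul σ α) '' 𝒜 = 𝒜)
    (φ : Γ → Mˣ)
    (hφ : ∀ σ : Γ, σ • f = (↑(φ σ)⁻¹ : M) * f * ↑(φ σ)) :
    (∀ σ : Γ, (fun α => φ σ * α * (φ σ)⁻¹) '' 𝒜 = 𝒜) ∧
      (∀ σ τ : Γ, φ σ * unitsSMul σ (φ τ) * (φ (σ * τ))⁻¹ ∈ 𝒜) :=
  fom_cocycle_in_normalizer_general f 𝒜 h𝒜 hstable φ hφ
end

section
/- Let s be a natural number and let e_1, …, e_r be a finite family of positive natural numbers with e_1 + ⋯ + e_r ≤ s. Then the product satisfies e_1·e_2⋯e_r ≤ exp(s/e), where e = exp(1). (By the arithmetic–geometric mean inequality, e_1⋯e_r ≤ ((e_1+⋯+e_r)/r)^r ≤ (s/r)^r ≤ exp(s/e).) -/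
open Real

/-- The tangent line to `exp` at `1` is `y ↦ e * y`, so `e * y ≤ exp y`; take `y = x / e`. -/
lemma le_exp_div_exp_one (x : ℝ) : x ≤ exp (x / exp 1) := by
  have tangent := add_one_le_exp (x / exp 1 - 1)
  rw [sub_add_cancel, exp_sub, le_div_iff₀ (exp_pos 1), div_mul_cancel₀ _ (exp_pos 1).ne'] at tangent
  exact tangent

theorem prod_le_exp_div_e_general {ι : Type*} [Fintype ι] (s : ℕ) (e : ι → ℕ)
    (hsum : ∑ i, e i ≤ s) :
    ((∏ i, e i : ℕ) : ℝ) ≤ Real.exp (s / Real.exp 1) := by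
  push_cast
  calc ∏ i, (e i : ℝ) ≤ ∏ i, exp (e i / exp 1) :=
        Finset.prod_le_prod (fun i _ ↦ Nat.cast_nonneg _) fun i _ ↦ le_exp_div_exp_one _
    _ = exp ((∑ i, (e i : ℝ)) / exp 1) := by rw [← exp_sum, Finset.sum_div]
    _ ≤ exp (s / exp 1) := by gcongr; exact_mod_cast hsum

/-- The AM–GM estimate used in the proof of Theorem 6.1(a):  if `e_1, …, e_r` are
positive natural numbers with `e_1 + ⋯ + e_r ≤ s`, then
`e_1 ⋯ e_r ≤ ((e_1+⋯+e_r)/r)^r ≤ (s/r)^r ≤ exp(s/e)`. -/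
theorem prod_le_exp_div_e {ι : Type*} [Fintype ι] (s : ℕ) (e : ι → ℕ)
    (he : ∀ i, 1 ≤ e i) (hsum : ∑ i, e i ≤ s) :
    ((∏ i, e i : ℕ) : ℝ) ≤ Real.exp (s / Real.exp 1) :=
  prod_le_exp_div_e_general s e hsum
end
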